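/- arXiv:1503.02600 — 2 statements merged into one kernel-verified Lean document; each statement's English description precedes it below -/
import Mathlib

section
/- Let σ_0 > 0 and suppose σ ≥ σ_0. Then with I_σ, ω_σ as above, there exist positive constants C_1 = 1 + ln I_{σ_0} and C_2 = σ_0²/(1 + σ_0² I_{σ_0}) (depending only on σ_0) such that C_2·(1 + ln(1 + σ²))/σ² ≤ L_σ ≤ C_1·(1 + ln(1 + σ²))/σ², where L_σ = (1 + ln(1 + 1/(σ²I_σ)))/(1 + σ²I_σ) + ln(1 + σ²I_σ)/(σ²I_σ). -/
/-! `I_σ` is the positive root of `x² = x + 1/σ²`, so `1 + 1/(σ² I_σ) = I_σ` and `1 + σ² I_σ = σ² I_σ²`.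
With `a = σ² I_σ ≥ σ²`, the first term of `L_σ` is at most `1/a` because `ln I_σ ≤ I_σ - 1 = 1/a`, and
`ln(1 + a) ≤ ln((1 + σ²) I_σ) ≤ ln(1 + σ²) + 1/a`; summing, `L_σ ≤ (1 + ln(1 + σ²))/σ²`.
For the lower bound both logarithms are dropped or compared monotonically, and
`C₂ = 1/I_{σ₀}² ≤ 1/I_σ²` since `σ ↦ I_σ` is decreasing. -/

open Real

namespace QuadRoot

variable {σ I C : ℝ}

lemma one_add_one_div_eq (hσ : 0 < σ) (hI : 1 < I) (hquad : σ ^ 2 * I ^ 2 = 1 + σ ^ 2 * I) :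
    1 + 1 / (σ ^ 2 * I) = I := by
  have : σ ^ 2 * I ≠ 0 := by positivity
  field_simp
  linarith

lemma log_one_add_le (hσ : 0 < σ) (hI : 1 < I) (hquad : σ ^ 2 * I ^ 2 = 1 + σ ^ 2 * I) :
    log (1 + σ ^ 2 * I) ≤ log (1 + σ ^ 2) + 1 / (σ ^ 2 * I) := by
  have hlogI : log I ≤ 1 / (σ ^ 2 * I) := by
    linarith [log_le_sub_one_of_pos (by linarith : 0 < I), one_add_one_div_eq hσ hI hquad]
  calc log (1 + σ ^ 2 * I) ≤ log ((1 + σ ^ 2) * I) := by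
        gcongr
        nlinarith
    _ = log (1 + σ ^ 2) + log I := log_mul (by positivity) (by linarith)
    _ ≤ log (1 + σ ^ 2) + 1 / (σ ^ 2 * I) := by gcongr

theorem le_one_add_log_div (hσ : 0 < σ) (hI : 1 < I) (hquad : σ ^ 2 * I ^ 2 = 1 + σ ^ 2 * I) :
    (1 + log (1 + 1 / (σ ^ 2 * I))) / (1 + σ ^ 2 * I) + log (1 + σ ^ 2 * I) / (σ ^ 2 * I)
      ≤ (1 + log (1 + σ ^ 2)) / σ ^ 2 := by
  have hinv := one_add_one_div_eq hσ hI hquad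
  have ha : 0 < σ ^ 2 * I := by positivity
  have hfirst : (1 + log I) / (1 + σ ^ 2 * I) ≤ 1 / (σ ^ 2 * I) := by
    rw [div_le_div_iff₀ (by positivity) ha]
    nlinarith [log_le_sub_one_of_pos (by linarith : 0 < I)]
  rw [hinv]
  calc (1 + log I) / (1 + σ ^ 2 * I) + log (1 + σ ^ 2 * I) / (σ ^ 2 * I)
      ≤ 1 / (σ ^ 2 * I) + (log (1 + σ ^ 2) + 1 / (σ ^ 2 * I)) / (σ ^ 2 * I) := by
        gcongr
        exact log_one_add_le hσ hI hquad
    _ = (1 + 1 / (σ ^ 2 * I)) / (σ ^ 2 * I) + log (1 + σ ^ 2) / (σ ^ 2 * I) := by ring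
    _ = 1 / σ ^ 2 + log (1 + σ ^ 2) / (σ ^ 2 * I) := by
        rw [hinv]
        field_simp
    _ ≤ 1 / σ ^ 2 + log (1 + σ ^ 2) / σ ^ 2 := by
        gcongr
        · exact log_nonneg (by nlinarith)
        · nlinarith
    _ = (1 + log (1 + σ ^ 2)) / σ ^ 2 := by ring

theorem mul_one_add_log_div_le (hσ : 0 < σ) (hI : 1 < I) (hquad : σ ^ 2 * I ^ 2 = 1 + σ ^ 2 * I)
    (hC : C ≤ 1 / I ^ 2) :
    C * (1 + log (1 + σ ^ 2)) / σ ^ 2 ≤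
      (1 + log (1 + 1 / (σ ^ 2 * I))) / (1 + σ ^ 2 * I) + log (1 + σ ^ 2 * I) / (σ ^ 2 * I) := by
  have hlog : 0 ≤ log (1 + σ ^ 2) := log_nonneg (by nlinarith)
  have hCI : C ≤ 1 / I := hC.trans (by gcongr; nlinarith)
  rw [one_add_one_div_eq hσ hI hquad]
  calc C * (1 + log (1 + σ ^ 2)) / σ ^ 2 = C / σ ^ 2 + C * log (1 + σ ^ 2) / σ ^ 2 := by ring
    _ ≤ 1 / I ^ 2 / σ ^ 2 + 1 / I * log (1 + σ ^ 2) / σ ^ 2 := by gcongr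
    _ = 1 / (1 + σ ^ 2 * I) + log (1 + σ ^ 2) / (σ ^ 2 * I) := by
        rw [← hquad]
        field_simp
    _ ≤ (1 + log I) / (1 + σ ^ 2 * I) + log (1 + σ ^ 2 * I) / (σ ^ 2 * I) := by
        gcongr
        · linarith [log_nonneg hI.le]
        · nlinarith

/-- The positive root of `x² = x + 1/σ²`. -/
noncomputable def posRoot (σ : ℝ) : ℝ := 1 / 2 + (1 / 2) * √(1 + 4 / σ ^ 2)

lemma sq_mul_posRoot_sq (hσ : σ ≠ 0) :
    σ ^ 2 * posRoot σ ^ 2 = 1 + σ ^ 2 * posRoot σ := by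
  have hsq : √(1 + 4 / σ ^ 2) ^ 2 = 1 + 4 / σ ^ 2 := sq_sqrt (by positivity)
  have h4 : σ ^ 2 * (4 / σ ^ 2) = 4 := mul_div_cancel₀ _ (by positivity)
  unfold posRoot
  linear_combination (σ ^ 2 / 4) * hsq + h4 / 4

lemma one_lt_posRoot (hσ : σ ≠ 0) : 1 < posRoot σ := by
  have : 1 < √(1 + 4 / σ ^ 2) := by
    rw [lt_sqrt zero_le_one]
    linarith [show 0 < 4 / σ ^ 2 by positivity]
  unfold posRoot
  linarith

lemma posRoot_le_posRoot {σ₀ : ℝ} (hσ₀ : 0 < σ₀) (hσ : σ₀ ≤ σ) :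
    posRoot σ ≤ posRoot σ₀ := by
  unfold posRoot
  gcongr

end QuadRoot

open QuadRoot

/-- Let σ ≥ σ₀ > 0 and I_σ = 1/2 + (1/2)√(1 + 4/σ²).  With
L_σ = (1 + ln(1 + 1/(σ²I_σ)))/(1 + σ²I_σ) + ln(1 + σ²I_σ)/(σ²I_σ),
C₁ = 1 + ln I_{σ₀} and C₂ = σ₀²/(1 + σ₀²I_{σ₀}), one has
C₂·(1 + ln(1 + σ²))/σ² ≤ L_σ ≤ C₁·(1 + ln(1 + σ²))/σ². -/
theorem stmt_11 (σ₀ σ : ℝ) (hσ₀ : 0 < σ₀) (hσ : σ₀ ≤ σ)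
    (I I₀ L C₁ C₂ : ℝ)
    (hI : I = 1 / 2 + (1 / 2) * Real.sqrt (1 + 4 / σ ^ 2))
    (hI₀ : I₀ = 1 / 2 + (1 / 2) * Real.sqrt (1 + 4 / σ₀ ^ 2))
    (hL : L = (1 + Real.log (1 + 1 / (σ ^ 2 * I))) / (1 + σ ^ 2 * I)
        + Real.log (1 + σ ^ 2 * I) / (σ ^ 2 * I))
    (hC₁ : C₁ = 1 + Real.log I₀)
    (hC₂ : C₂ = σ₀ ^ 2 / (1 + σ₀ ^ 2 * I₀)) :
    0 < C₁ ∧ 0 < C₂ ∧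
      C₂ * (1 + Real.log (1 + σ ^ 2)) / σ ^ 2 ≤ L ∧
      L ≤ C₁ * (1 + Real.log (1 + σ ^ 2)) / σ ^ 2 := by
  obtain rfl : I = posRoot σ := hI
  obtain rfl : I₀ = posRoot σ₀ := hI₀
  subst hL hC₁ hC₂
  have hσpos : 0 < σ := hσ₀.trans_le hσ
  have hquad := sq_mul_posRoot_sq hσpos.ne'
  have hquad₀ := sq_mul_posRoot_sq hσ₀.ne'
  have hI := one_lt_posRoot hσpos.ne'
  have hI₀ := one_lt_posRoot hσ₀.ne'
  have hC₁ : 1 ≤ 1 + log (posRoot σ₀) := by linarith [log_nonneg hI₀.le]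
  have hC₂ : σ₀ ^ 2 / (1 + σ₀ ^ 2 * posRoot σ₀) = 1 / posRoot σ₀ ^ 2 := by
    rw [← hquad₀]
    field_simp
  refine ⟨by linarith, by rw [hC₂]; positivity, ?_, ?_⟩
  · refine mul_one_add_log_div_le hσpos hI hquad ?_
    rw [hC₂]
    gcongr
    exact posRoot_le_posRoot hσ₀ hσ
  · calc _ ≤ (1 + log (1 + σ ^ 2)) / σ ^ 2 := le_one_add_log_div hσpos hI hquad
      _ ≤ _ := by
        gcongr
        exact le_mul_of_one_le_left (by linarith [log_nonneg (by nlinarith : 1 ≤ 1 + σ ^ 2)]) hC₁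
end

section
/- Let r ≥ r_0 > 1/2, g ∈ (0, g_0] with g_0 ≤ 1, and consider normalized Korobov eigenvalues λ̄_1 = 1/Λ, λ̄_{2k} = λ̄_{2k+1} = g k^{−2r}/Λ with Λ = 1 + 2gζ(2r). Then the sum L = ∑_{k=2}^∞ (1 + |ln λ̄_k|)·λ̄_k satisfies C₁·(1 + |ln g|)·g ≤ L ≤ C₂·(1 + |ln g|)·g for constants C₁ = 2/(1 + 2g_0 ζ(2r_0)) > 0 and some C₂ depending only on r_0 and g_0. -/
/-!
Since every normalized eigenvalue is at most `1`,
`|ln λ̄| = |ln g| + 2r ln(k+1) + ln Λ`, so the sum is exactly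
`(2g/Λ) ((1 + |ln g| + ln Λ) ζ(2r) + ∑ₖ 2r ln(k+1) (k+1)^{-2r})`.
Dropping the nonnegative terms gives the lower bound. For the upper bound, `ln Λ ≤ Λ - 1` and
`ln x ≤ x^ε / ε` with `ε = δ s` give `s ln x · x^{-s} ≤ δ⁻¹ x^{-(1-δ)s}`, which bounds the
logarithmic series uniformly in `r ≥ r₀` by a convergent zeta sum.
-/

open Real

/-- `zetaSum s = ζ(s)` for real `s > 1`. -/
noncomputable def zetaSum (s : ℝ) : ℝ := ∑' k : ℕ, ((k : ℝ) + 1) ^ (-s)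

/-- `zetaLogSum s = -s ζ'(s) = ∑ₖ ln(kˢ)/kˢ`. -/
noncomputable def zetaLogSum (s : ℝ) : ℝ :=
  ∑' k : ℕ, s * log ((k : ℝ) + 1) * ((k : ℝ) + 1) ^ (-s)

lemma mul_log_mul_rpow_neg_le {s δ x : ℝ} (hs : 0 < s) (hδ : 0 < δ) (hx : 0 < x) :
    s * log x * x ^ (-s) ≤ δ⁻¹ * x ^ (-((1 - δ) * s)) := by
  have hlog := log_le_rpow_div hx.le (mul_pos hδ hs)
  calc s * log x * x ^ (-s) ≤ s * (x ^ (δ * s) / (δ * s)) * x ^ (-s) := by gcongr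
    _ = δ⁻¹ * (x ^ (δ * s) * x ^ (-s)) := by field_simp
    _ = δ⁻¹ * x ^ (-((1 - δ) * s)) := by rw [← rpow_add hx]; ring_nf

/-- `δ = (s₀ - 1) / (2 s₀)` in `mul_log_mul_rpow_neg_le`. -/
lemma mul_log_mul_rpow_neg_le_of_le {s₀ s x : ℝ} (hs₀ : 1 < s₀) (hs : s₀ ≤ s) (hx : 1 ≤ x) :
    s * log x * x ^ (-s) ≤ 2 * s₀ / (s₀ - 1) * x ^ (-((s₀ + 1) / 2)) := by
  have hδ : 0 < (s₀ - 1) / (2 * s₀) := by apply div_pos <;> linarith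
  have hδ1 : (s₀ - 1) / (2 * s₀) ≤ 1 := by rw [div_le_one (by linarith)]; linarith
  calc s * log x * x ^ (-s)
      ≤ ((s₀ - 1) / (2 * s₀))⁻¹ * x ^ (-((1 - (s₀ - 1) / (2 * s₀)) * s)) :=
        mul_log_mul_rpow_neg_le (by linarith) hδ (by linarith)
    _ ≤ ((s₀ - 1) / (2 * s₀))⁻¹ * x ^ (-((1 - (s₀ - 1) / (2 * s₀)) * s₀)) := by
        gcongr
    _ = 2 * s₀ / (s₀ - 1) * x ^ (-((s₀ + 1) / 2)) := by
        rw [inv_div]; congr 2; field_simp; ring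

lemma summable_rpow_neg_succ {s : ℝ} (hs : 1 < s) :
    Summable fun k : ℕ => ((k : ℝ) + 1) ^ (-s) := by
  simpa using (summable_nat_add_iff 1).mpr (summable_nat_rpow.mpr (by linarith : -s < -1))

lemma summable_mul_log_mul_rpow_neg_succ {s : ℝ} (hs : 1 < s) :
    Summable fun k : ℕ => s * log ((k : ℝ) + 1) * ((k : ℝ) + 1) ^ (-s) := by
  refine Summable.of_nonneg_of_le (fun k => ?_) (fun k => ?_)
    ((summable_rpow_neg_succ (s := (s + 1) / 2) (by linarith)).mul_left (2 * s / (s - 1)))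
  · have : 0 ≤ log ((k : ℝ) + 1) := log_nonneg (by simp)
    positivity
  · exact mul_log_mul_rpow_neg_le_of_le hs le_rfl (by simp)

lemma zetaSum_nonneg (s : ℝ) : 0 ≤ zetaSum s :=
  tsum_nonneg fun _ => by positivity

lemma one_le_zetaSum {s : ℝ} (hs : 1 < s) : 1 ≤ zetaSum s := by
  unfold zetaSum
  simpa using (summable_rpow_neg_succ hs).le_tsum 0 fun _ _ => by positivity

lemma zetaSum_le_zetaSum {s₀ s : ℝ} (hs₀ : 1 < s₀) (hs : s₀ ≤ s) : zetaSum s ≤ zetaSum s₀ :=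
  (summable_rpow_neg_succ (hs₀.trans_le hs)).tsum_le_tsum
    (fun k => rpow_le_rpow_of_exponent_le (by simp) (by linarith)) (summable_rpow_neg_succ hs₀)

lemma zetaLogSum_nonneg {s : ℝ} (hs : 0 ≤ s) : 0 ≤ zetaLogSum s :=
  tsum_nonneg fun k => by
    have : 0 ≤ log ((k : ℝ) + 1) := log_nonneg (by simp)
    positivity

noncomputable def zetaLogBound (s₀ : ℝ) : ℝ := 2 * s₀ / (s₀ - 1) * zetaSum ((s₀ + 1) / 2)

lemma zetaLogBound_nonneg {s₀ : ℝ} (hs₀ : 1 < s₀) : 0 ≤ zetaLogBound s₀ := by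
  have := zetaSum_nonneg ((s₀ + 1) / 2)
  have : 0 < s₀ - 1 := by linarith
  unfold zetaLogBound
  positivity

lemma zetaLogSum_le {s₀ s : ℝ} (hs₀ : 1 < s₀) (hs : s₀ ≤ s) : zetaLogSum s ≤ zetaLogBound s₀ := by
  rw [zetaLogBound, zetaSum, ← tsum_mul_left]
  exact (summable_mul_log_mul_rpow_neg_succ (hs₀.trans_le hs)).tsum_le_tsum
    (fun k => mul_log_mul_rpow_neg_le_of_le hs₀ hs (by simp))
    ((summable_rpow_neg_succ (by linarith)).mul_left _)

noncomputable def korobovTrace (r g : ℝ) : ℝ := 1 + 2 * g * zetaSum (2 * r)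

/-- The paper's `λ̄_{2k+2} = λ̄_{2k+3}`, where `Λ = korobovTrace r g`; the sum over all
`k : ℕ` counts each of these doubled eigenvalues once, whence the factor `2` in the summand. -/
noncomputable def korobovEig (r g : ℝ) (k : ℕ) : ℝ :=
  g * ((k : ℝ) + 1) ^ (-(2 * r)) / korobovTrace r g

lemma one_le_korobovTrace {r g : ℝ} (hg : 0 ≤ g) : 1 ≤ korobovTrace r g := by
  have := zetaSum_nonneg (2 * r)
  unfold korobovTrace; nlinarith

lemma korobovTrace_le {r₀ g₀ r g : ℝ} (hr₀ : 1 / 2 < r₀) (hr : r₀ ≤ r) (hg : 0 ≤ g)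
    (hgg₀ : g ≤ g₀) : korobovTrace r g ≤ korobovTrace r₀ g₀ := by
  have := zetaSum_nonneg (2 * r)
  have := zetaSum_le_zetaSum (s₀ := 2 * r₀) (s := 2 * r) (by linarith) (by linarith)
  unfold korobovTrace
  gcongr
  linarith

lemma abs_log_korobovEig {r g : ℝ} (hr : 0 ≤ r) (hg : 0 < g) (hg1 : g ≤ 1) (k : ℕ) :
    |log (korobovEig r g k)| = |log g| + 2 * r * log ((k : ℝ) + 1) + log (korobovTrace r g) := by
  have hΛ := one_le_korobovTrace (r := r) hg.le
  have hk : (1 : ℝ) ≤ (k : ℝ) + 1 := by simp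
  have hp : 0 < ((k : ℝ) + 1) ^ (-(2 * r)) := by positivity
  have hp1 : ((k : ℝ) + 1) ^ (-(2 * r)) ≤ 1 := rpow_le_one_of_one_le_of_nonpos hk (by linarith)
  have heig_le_one : korobovEig r g k ≤ 1 := by
    rw [korobovEig, div_le_one (by linarith)]; nlinarith
  rw [abs_of_nonpos (log_nonpos (by unfold korobovEig; positivity) heig_le_one),
    abs_of_nonpos (log_nonpos hg.le hg1), korobovEig, log_div (by positivity) (by linarith),
    log_mul hg.ne' hp.ne', log_rpow (by linarith)]
  ring

lemma hasSum_korobov {r g : ℝ} (hr : 1 / 2 < r) (hg : 0 < g) (hg1 : g ≤ 1) :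
    HasSum (fun k : ℕ => 2 * (1 + |log (korobovEig r g k)|) * korobovEig r g k)
      (2 * g / korobovTrace r g * ((1 + |log g| + log (korobovTrace r g)) * zetaSum (2 * r)
        + zetaLogSum (2 * r))) := by
  have hsum := (((summable_rpow_neg_succ (s := 2 * r) (by linarith)).hasSum.mul_left
    (1 + |log g| + log (korobovTrace r g))).add
    (summable_mul_log_mul_rpow_neg_succ (s := 2 * r) (by linarith)).hasSum).mul_left
    (2 * g / korobovTrace r g)
  refine hsum.congr_fun fun k => ?_
  rw [abs_log_korobovEig (by linarith) hg hg1, korobovEig]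
  ring

lemma korobov_sum_lower {r₀ g₀ r g : ℝ} (hr₀ : 1 / 2 < r₀) (hr : r₀ ≤ r) (hg : 0 < g)
    (hgg₀ : g ≤ g₀) :
    2 / korobovTrace r₀ g₀ * (1 + |log g|) * g ≤
      2 * g / korobovTrace r g * ((1 + |log g| + log (korobovTrace r g)) * zetaSum (2 * r)
        + zetaLogSum (2 * r)) := by
  have hΛ := one_le_korobovTrace (r := r) hg.le
  have hΛ₀ := korobovTrace_le hr₀ hr hg.le hgg₀
  have hZ := one_le_zetaSum (s := 2 * r) (by linarith)
  have hM := zetaLogSum_nonneg (s := 2 * r) (by linarith)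
  have hlogΛ := log_nonneg hΛ
  calc 2 / korobovTrace r₀ g₀ * (1 + |log g|) * g
      = 2 * g / korobovTrace r₀ g₀ * (1 + |log g|) := by ring
    _ ≤ 2 * g / korobovTrace r g * (1 + |log g|) := by gcongr
    _ ≤ 2 * g / korobovTrace r g * ((1 + |log g| + log (korobovTrace r g)) * zetaSum (2 * r)
        + zetaLogSum (2 * r)) :=
      mul_le_mul_of_nonneg_left (by nlinarith [abs_nonneg (log g)]) (by positivity)

lemma korobov_sum_upper {r₀ g₀ r g : ℝ} (hr₀ : 1 / 2 < r₀) (hr : r₀ ≤ r) (hg : 0 < g)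
    (hgg₀ : g ≤ g₀) :
    2 * g / korobovTrace r g * ((1 + |log g| + log (korobovTrace r g)) * zetaSum (2 * r)
        + zetaLogSum (2 * r)) ≤
      2 * (korobovTrace r₀ g₀ * zetaSum (2 * r₀)
        + zetaLogBound (2 * r₀)) * (1 + |log g|) * g := by
  have hΛ := one_le_korobovTrace (r := r) hg.le
  have hΛ₀ := korobovTrace_le hr₀ hr hg.le hgg₀
  have hZ₀ := zetaSum_nonneg (2 * r₀)
  have hB := zetaLogBound_nonneg (s₀ := 2 * r₀) (by linarith)
  have ha := abs_nonneg (log g)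
  have hlogΛ := log_nonneg hΛ
  have hinner : (1 + |log g| + log (korobovTrace r g)) * zetaSum (2 * r) + zetaLogSum (2 * r) ≤
      (|log g| + korobovTrace r₀ g₀) * zetaSum (2 * r₀) + zetaLogBound (2 * r₀) := by
    have hcoef : 1 + |log g| + log (korobovTrace r g) ≤ |log g| + korobovTrace r₀ g₀ := by
      linarith [log_le_sub_one_of_pos (zero_lt_one.trans_le hΛ)]
    have hZ := zetaSum_le_zetaSum (s₀ := 2 * r₀) (s := 2 * r) (by linarith) (by linarith)
    have hM := zetaLogSum_le (s₀ := 2 * r₀) (s := 2 * r) (by linarith) (by linarith)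
    exact add_le_add (mul_le_mul hcoef hZ (zetaSum_nonneg _) (by linarith)) hM
  calc 2 * g / korobovTrace r g * ((1 + |log g| + log (korobovTrace r g)) * zetaSum (2 * r)
        + zetaLogSum (2 * r))
      ≤ 2 * g * ((1 + |log g| + log (korobovTrace r g)) * zetaSum (2 * r)
        + zetaLogSum (2 * r)) :=
        mul_le_mul_of_nonneg_right (div_le_self (by positivity) hΛ)
          (add_nonneg (mul_nonneg (by positivity) (zetaSum_nonneg _))
            (zetaLogSum_nonneg (by linarith)))
    _ ≤ 2 * g * ((|log g| + korobovTrace r₀ g₀) * zetaSum (2 * r₀) + zetaLogBound (2 * r₀)) := by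
        gcongr
    _ ≤ _ := by
        nlinarith [mul_nonneg hg.le (mul_nonneg (mul_nonneg ha hZ₀) (sub_nonneg.2 (hΛ.trans hΛ₀))),
          mul_nonneg hg.le (mul_nonneg ha hB)]

/-- Korobov normalized eigenvalues: for r ≥ r₀ > 1/2 and 0 < g ≤ g₀ ≤ 1, with trace
Λ = 1 + 2gζ(2r), the sum L = ∑_{k=2}^∞ (1 + |ln λ̄_k|)λ̄_k
(here L = 2∑_{k=1}^∞ (1 + |ln(g k^{−2r}/Λ)|)·g k^{−2r}/Λ, pairing the doubled eigenvalues)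
satisfies C₁(1 + |ln g|)g ≤ L ≤ C₂(1 + |ln g|)g with C₁ = 2/(1 + 2g₀ζ(2r₀)) and
some C₂ > 0 depending only on r₀, g₀.  ζ(s) = ∑_{k=1}^∞ k^{-s}. -/
theorem stmt_16 (r₀ g₀ : ℝ) (hr₀ : 1 / 2 < r₀) (hg₀0 : 0 < g₀) (hg₀1 : g₀ ≤ 1) :
    ∃ C₂ : ℝ, 0 < C₂ ∧ ∀ r g : ℝ, r₀ ≤ r → 0 < g → g ≤ g₀ →
      (2 / (1 + 2 * g₀ * ∑' k : ℕ, ((k : ℝ) + 1) ^ (-(2 * r₀)))) * (1 + |Real.log g|) * g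
        ≤ (∑' k : ℕ, 2 * (1 + |Real.log (g * ((k : ℝ) + 1) ^ (-(2 * r))
              / (1 + 2 * g * ∑' i : ℕ, ((i : ℝ) + 1) ^ (-(2 * r))))|)
            * (g * ((k : ℝ) + 1) ^ (-(2 * r))
              / (1 + 2 * g * ∑' i : ℕ, ((i : ℝ) + 1) ^ (-(2 * r))))) ∧
      (∑' k : ℕ, 2 * (1 + |Real.log (g * ((k : ℝ) + 1) ^ (-(2 * r))
              / (1 + 2 * g * ∑' i : ℕ, ((i : ℝ) + 1) ^ (-(2 * r))))|)
            * (g * ((k : ℝ) + 1) ^ (-(2 * r))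
              / (1 + 2 * g * ∑' i : ℕ, ((i : ℝ) + 1) ^ (-(2 * r)))))
        ≤ C₂ * (1 + |Real.log g|) * g := by
  have hΛ₀ : 1 ≤ korobovTrace r₀ g₀ := one_le_korobovTrace hg₀0.le
  have hZ₀ : 1 ≤ zetaSum (2 * r₀) := one_le_zetaSum (by linarith)
  have hB := zetaLogBound_nonneg (s₀ := 2 * r₀) (by linarith)
  refine ⟨2 * (korobovTrace r₀ g₀ * zetaSum (2 * r₀) + zetaLogBound (2 * r₀)), by nlinarith,
    fun r g hr hg hgg₀ => ?_⟩
  show 2 / korobovTrace r₀ g₀ * (1 + |log g|) * g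
      ≤ ∑' k, 2 * (1 + |log (korobovEig r g k)|) * korobovEig r g k ∧
    ∑' k, 2 * (1 + |log (korobovEig r g k)|) * korobovEig r g k
      ≤ 2 * (korobovTrace r₀ g₀ * zetaSum (2 * r₀) + zetaLogBound (2 * r₀)) * (1 + |log g|) * g
  rw [(hasSum_korobov (by linarith) hg (hgg₀.trans hg₀1)).tsum_eq]
  exact ⟨korobov_sum_lower hr₀ hr hg hgg₀, korobov_sum_upper hr₀ hr hg hgg₀⟩
end
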